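/- (Symplectic Eigenskeleton, Part 4, planar case.) Let Φ be a symplectic 2n×2n real matrix (Φᵀ J_{2n} Φ = J_{2n}), Ψ = Φᵀ Φ, and let ξ ∈ ℝ^{2n} be a unit eigenvector of Ψ (Ψξ = λξ, ‖ξ‖ = 1). Then the area of the parallelogram spanned by Φξ and Φ(J_{2n}ξ) equals 1, the area of the parallelogram spanned by ξ and J_{2n}ξ: explicitly, ‖Φξ‖²·‖Φ(J_{2n}ξ)‖² − ⟨Φξ, Φ(J_{2n}ξ)⟩² = 1. Thus Φ preserves the area of any area element parallel to a symplectic eigenskeleton plane. -/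

import Mathlib

/-!
Write `Ψ = Φᵀ Φ` and `η = J ξ`. Symplecticity of `Φ` also gives `Φ J Φᵀ = J`, hence
`Ψ J Ψ = J`, and applying this to the eigenvector `ξ` yields `λ Ψ η = η`. Since
`⟨Φ a, Φ b⟩ = ⟨a, Ψ b⟩`, the Gram entries are `‖Φ ξ‖² = λ`, `λ ‖Φ η‖² = ‖η‖² = 1`
(`J` is orthogonal) and `⟨Φ ξ, Φ η⟩ = λ ⟨J ξ, ξ⟩ = 0` (`J` is skew), so the Gram
determinant is `1`.
-/

open Matrix

/-- The standard symplectic matrix `J` on `ℝ^{2m}`, with coordinates ordered in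
symplectic pairs `(p₁,q₁,…,p_m,q_m)`. -/
def symplJ (m : ℕ) : Matrix (Fin (2 * m)) (Fin (2 * m)) ℝ :=
  Matrix.of fun i j =>
    if i.val + 1 = j.val ∧ i.val % 2 = 0 then (-1 : ℝ)
    else if j.val + 1 = i.val ∧ j.val % 2 = 0 then 1 else 0

lemma symplJ_transpose (m : ℕ) : (symplJ m)ᵀ = -symplJ m := by
  ext i j
  simp only [transpose_apply, Matrix.neg_apply, symplJ, of_apply]
  split_ifs <;> grind

lemma symplJ_mul_self (m : ℕ) : symplJ m * symplJ m = -1 := by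
  ext i j
  -- row `i` has its only nonzero entry in the column `k` of its symplectic partner
  let k : Fin (2 * m) := ⟨if i.val % 2 = 0 then i.val + 1 else i.val - 1, by grind⟩
  rw [mul_apply, neg_apply, one_apply, Finset.sum_eq_single k]
  · simp only [symplJ, of_apply, k, Fin.ext_iff]
    split_ifs <;> grind
  · intro b _ hb
    simp only [symplJ, of_apply, k, ne_eq, Fin.ext_iff] at hb ⊢
    split_ifs <;> grind
  · simp

lemma symplJ_transpose_mul_self (m : ℕ) : (symplJ m)ᵀ * symplJ m = 1 := by
  rw [symplJ_transpose, Matrix.neg_mul, symplJ_mul_self, neg_neg]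

namespace Matrix

variable {ι κ R : Type*} [Fintype ι] [Fintype κ]

theorem mulVec_dotProduct_mulVec [CommSemiring R] (A : Matrix κ ι R) (a b : ι → R) :
    A *ᵥ a ⬝ᵥ A *ᵥ b = a ⬝ᵥ (Aᵀ * A) *ᵥ b := by
  rw [dotProduct_mulVec, dotProduct_mulVec, ← vecMul_vecMul, vecMul_transpose]

theorem mulVec_dotProduct_self_eq_zero_of_transpose_eq_neg [CommRing R] [NoZeroDivisors R]
    [CharZero R] {J : Matrix ι ι R} (hJ : Jᵀ = -J) (v : ι → R) : J *ᵥ v ⬝ᵥ v = 0 := by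
  rw [← CharZero.neg_eq_self_iff, ← neg_dotProduct, ← neg_mulVec, ← hJ, ← vecMul_transpose,
    transpose_transpose, ← dotProduct_mulVec, dotProduct_comm]

theorem smul_mulVec_mulVec_eq_of_mul_mul_eq [CommSemiring R] {Ψ J : Matrix ι ι R}
    (h : Ψ * J * Ψ = J) {ξ : ι → R} {lam : R} (hξ : Ψ *ᵥ ξ = lam • ξ) :
    lam • Ψ *ᵥ J *ᵥ ξ = J *ᵥ ξ := by
  rw [← mulVec_smul, ← mulVec_smul, ← hξ, mulVec_mulVec, mulVec_mulVec, h]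

theorem mul_mul_transpose_eq_of_transpose_mul_mul_eq [DecidableEq ι] [CommRing R]
    {J Φ : Matrix ι ι R} (hJ : J * J = -1) (hΦ : Φᵀ * J * Φ = J) : Φ * J * Φᵀ = J := by
  -- `Φ` has the left inverse `-J Φᵀ J`, hence it is also a right inverse
  have hleft : (-J * Φᵀ * J) * Φ = 1 := by
    rw [show -J * Φᵀ * J * Φ = -J * (Φᵀ * J * Φ) by simp only [Matrix.mul_assoc], hΦ,
      Matrix.neg_mul, hJ, neg_neg]
  have hright : Φ * J * Φᵀ * J = -1 := by
    simpa only [Matrix.mul_neg, Matrix.neg_mul, Matrix.mul_assoc, neg_eq_iff_eq_neg]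
      using mul_eq_one_comm.mp hleft
  calc Φ * J * Φᵀ = -(Φ * J * Φᵀ * (J * J)) := by
        rw [hJ, Matrix.mul_neg, Matrix.mul_one, neg_neg]
    _ = J := by rw [← Matrix.mul_assoc, hright, Matrix.neg_mul, Matrix.one_mul, neg_neg]

end Matrix

/-- **Symplectic Eigenskeleton, Part 4 (planar case).**  Let `Φ` be symplectic,
`Ψ = Φᵀ Φ`, and let `ξ` be a unit eigenvector of `Ψ`.  Then the squared area
(Gram determinant) of the parallelogram spanned by `Φξ` and `Φ(Jξ)` equals `1`,
the area of the parallelogram spanned by `ξ` and `Jξ`: `Φ` preserves the area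
of any area element parallel to a symplectic eigenskeleton plane. -/
theorem eigenskeleton_plane_area_preserved (n : ℕ)
    (Φ : Matrix (Fin (2 * n)) (Fin (2 * n)) ℝ)
    (hΦ : Φᵀ * symplJ n * Φ = symplJ n)
    (ξ : Fin (2 * n) → ℝ) (lam : ℝ)
    (heig : (Φᵀ * Φ).mulVec ξ = lam • ξ) (hunit : ξ ⬝ᵥ ξ = 1) :
    (Φ.mulVec ξ ⬝ᵥ Φ.mulVec ξ) *
        (Φ.mulVec ((symplJ n).mulVec ξ) ⬝ᵥ Φ.mulVec ((symplJ n).mulVec ξ)) -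
      (Φ.mulVec ξ ⬝ᵥ Φ.mulVec ((symplJ n).mulVec ξ)) ^ 2 = 1 := by
  set J := symplJ n
  set η := J *ᵥ ξ
  have hΨJΨ : Φᵀ * Φ * J * (Φᵀ * Φ) = J := by
    calc Φᵀ * Φ * J * (Φᵀ * Φ) = Φᵀ * (Φ * J * Φᵀ) * Φ := by simp only [Matrix.mul_assoc]
      _ = J := by rw [mul_mul_transpose_eq_of_transpose_mul_mul_eq (symplJ_mul_self n) hΦ, hΦ]
  have hη : lam • (Φᵀ * Φ) *ᵥ η = η := smul_mulVec_mulVec_eq_of_mul_mul_eq hΨJΨ heig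
  have hηξ : η ⬝ᵥ ξ = 0 :=
    mulVec_dotProduct_self_eq_zero_of_transpose_eq_neg (symplJ_transpose n) ξ
  have hηη : η ⬝ᵥ η = 1 := by
    rw [mulVec_dotProduct_mulVec, symplJ_transpose_mul_self, one_mulVec, hunit]
  have hΦξ : Φ *ᵥ ξ ⬝ᵥ Φ *ᵥ ξ = lam := by
    rw [mulVec_dotProduct_mulVec, heig, dotProduct_smul, hunit, smul_eq_mul, mul_one]
  have hΦη : lam * (Φ *ᵥ η ⬝ᵥ Φ *ᵥ η) = 1 := by
    rw [mulVec_dotProduct_mulVec, ← smul_eq_mul, ← dotProduct_smul, hη, hηη]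
  have hΦξΦη : Φ *ᵥ ξ ⬝ᵥ Φ *ᵥ η = 0 := by
    rw [dotProduct_comm, mulVec_dotProduct_mulVec, heig, dotProduct_smul, hηξ, smul_zero]
  rw [hΦξ, hΦξΦη, hΦη]
  norm_num
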